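/- arXiv:1711.05958 — 2 statements merged into one kernel-verified Lean document; each statement's English description precedes it below -/
import Mathlib

section
/- The Kanev correspondence operator of the adjoint orbit of E₈ satisfies a quadratic equation with integer coefficient q = 60. Precisely: let P be the linear endomorphism of the real vector space of functions f : Δ → ℝ defined by (P f)(α) = Σ_{β ∈ Δ} ⟨α,β⟩·f(β). Then P ∘ P = 60 · P. -/
open scoped BigOperators RealInnerProductSpace

noncomputable section

abbrev E8Space : Type := EuclideanSpace ℝ (Fin 8)

/-- The E₈ root system: vectors of square-norm 2 whose coordinates are either all
integers or all half-integers, with even coordinate sum. -/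
def E8Delta : Set E8Space :=
  {v | ⟪v, v⟫ = 2 ∧
    ((∀ i : Fin 8, ∃ n : ℤ, v i = (n : ℝ)) ∨
     (∀ i : Fin 8, ∃ n : ℤ, v i = (n : ℝ) + 1 / 2)) ∧
    ∃ m : ℤ, (∑ i : Fin 8, v i) = 2 * (m : ℝ)}

/-- The Kanev correspondence operator on functions on the E₈ root system:
`(P f)(α) = ∑_{β ∈ Δ} ⟪α,β⟫ f(β)`. -/
def KanevP (f : E8Delta → ℝ) (α : E8Delta) : ℝ :=
  ∑ᶠ β : E8Delta, ⟪(α : E8Space), (β : E8Space)⟫ * f β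

/-!
For any finite set `S` of vectors, `P ∘ P = c • P` as soon as `S` is a tight frame with
constant `c`, i.e. `∑_{β ∈ S} ⟪x,β⟫⟪β,y⟫ = c⟪x,y⟫`: exchanging the two sums in `P (P f)`
leaves exactly the inner sums `∑_β ⟪α,β⟫⟪β,γ⟫`. For the E₈ roots the frame identity reduces
to `∑_β βᵢβⱼ = 60 δᵢⱼ`, where `60 = 240 · 2 / 8` (number of roots times their square norm,
divided by the dimension); this is checked on an explicit list of the roots. In doubled
coordinates the roots are the integer vectors of square norm 8 whose entries are all in
`{-2, 0, 2}` or all in `{-1, 1}` and whose coordinate sum is divisible by 4, which makes the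
list easy to generate and to prove complete.
-/

section GramOperator

variable {E : Type*} [NormedAddCommGroup E] [InnerProductSpace ℝ E]

def gramOperator (S : Set E) (f : S → ℝ) (α : S) : ℝ :=
  ∑ᶠ β : S, ⟪(α : E), (β : E)⟫ * f β

variable {S : Set E}

theorem gramOperator_eq_sum [Fintype S] (f : S → ℝ) (α : S) :
    gramOperator S f α = ∑ β : S, ⟪(α : E), (β : E)⟫ * f β :=
  finsum_eq_sum_of_fintype _

theorem isLinearMap_gramOperator (hS : S.Finite) : IsLinearMap ℝ (gramOperator S) := by
  have := hS.fintype
  refine ⟨fun f g => funext fun α => ?_, fun c f => funext fun α => ?_⟩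
  · simp only [gramOperator_eq_sum, Pi.add_apply, mul_add, Finset.sum_add_distrib]
  · simp only [gramOperator_eq_sum, Pi.smul_apply, smul_eq_mul, Finset.mul_sum, mul_left_comm]

theorem gramOperator_comp_self (hS : S.Finite) {c : ℝ}
    (hframe : ∀ x y : E, ∑ᶠ β : S, ⟪x, (β : E)⟫ * ⟪(β : E), y⟫ = c * ⟪x, y⟫) :
    gramOperator S ∘ gramOperator S = c • gramOperator S := by
  have := hS.fintype
  funext f α
  have hframe' (γ : S) :
      ∑ β : S, ⟪(α : E), (β : E)⟫ * ⟪(β : E), (γ : E)⟫ = c * ⟪(α : E), (γ : E)⟫ := by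
    rw [← hframe, finsum_eq_sum_of_fintype]
  simp only [Function.comp_apply, Pi.smul_apply, smul_eq_mul, gramOperator_eq_sum, Finset.mul_sum]
  rw [Finset.sum_comm]
  refine Finset.sum_congr rfl fun γ _ => ?_
  rw [← mul_assoc, ← hframe', Finset.sum_mul]
  exact Finset.sum_congr rfl fun β _ => by ring

end GramOperator

theorem sum_inner_mul_inner_of_sum_mul_apply {ι : Type*} [Fintype ι] [DecidableEq ι]
    {s : Finset (EuclideanSpace ℝ ι)} {c : ℝ}
    (hs : ∀ i j, ∑ β ∈ s, β i * β j = if i = j then c else 0) (x y : EuclideanSpace ℝ ι) :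
    ∑ β ∈ s, ⟪x, β⟫ * ⟪β, y⟫ = c * ⟪x, y⟫ := by
  simp only [PiLp.inner_apply, RCLike.inner_apply, conj_trivial, Finset.sum_mul_sum]
  rw [Finset.sum_comm]
  calc ∑ i, ∑ β ∈ s, ∑ j, β i * x i * (y j * β j)
      = ∑ i, ∑ j, x i * y j * ∑ β ∈ s, β i * β j := by
        refine Finset.sum_congr rfl fun i _ => ?_
        rw [Finset.sum_comm]
        simp only [Finset.mul_sum]
        exact Finset.sum_congr rfl fun j _ => Finset.sum_congr rfl fun β _ => by ring
    _ = c * ∑ i, y i * x i := by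
        simp only [hs, mul_ite, mul_zero, Finset.sum_ite_eq, Finset.mem_univ, if_true,
          Finset.mul_sum]
        exact Finset.sum_congr rfl fun i _ => by ring

def vectorsOfSqNorm (A : List ℤ) : (n : ℕ) → ℤ → List (Fin n → ℤ)
  | 0, N => if N = 0 then [Fin.elim0] else []
  | n + 1, N => if N < 0 then [] else
      A.flatMap fun x => (vectorsOfSqNorm A n (N - x ^ 2)).map (Fin.cons x)

theorem mem_vectorsOfSqNorm {A : List ℤ} {n : ℕ} {N : ℤ} {w : Fin n → ℤ} :
    w ∈ vectorsOfSqNorm A n N ↔ (∀ i, w i ∈ A) ∧ ∑ i, w i ^ 2 = N := by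
  induction n generalizing N with
  | zero => simp [vectorsOfSqNorm, Subsingleton.elim w Fin.elim0, eq_comm]
  | succ n ih =>
    rw [vectorsOfSqNorm]
    split_ifs with hN
    · have := Finset.sum_nonneg fun i (_ : i ∈ Finset.univ) => sq_nonneg (w i)
      simp only [List.not_mem_nil, false_iff, not_and]
      intro _ h
      omega
    · simp only [List.mem_flatMap, List.mem_map, ih]
      constructor
      · rintro ⟨x, hx, u, ⟨hu, hsum⟩, rfl⟩
        refine ⟨Fin.cases hx hu, ?_⟩
        rw [Fin.sum_univ_succ]
        simp [hsum]
      · rintro ⟨hA, hsum⟩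
        refine ⟨w 0, hA 0, Fin.tail w, ⟨fun i => hA _, ?_⟩, Fin.cons_self_tail w⟩
        rw [Fin.sum_univ_succ] at hsum
        simp only [Fin.tail]
        linarith

theorem nodup_vectorsOfSqNorm {A : List ℤ} (hA : A.Nodup) (n : ℕ) (N : ℤ) :
    (vectorsOfSqNorm A n N).Nodup := by
  induction n generalizing N with
  | zero => unfold vectorsOfSqNorm; split_ifs <;> simp
  | succ n ih =>
    unfold vectorsOfSqNorm
    split_ifs
    · exact List.nodup_nil
    · refine List.nodup_flatMap.2
        ⟨fun x _ => (ih _).map (Fin.cons_right_injective (α := fun _ => ℤ) x), hA.imp ?_⟩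
      intro x y hxy
      simp only [Function.onFun, List.disjoint_left, List.mem_map]
      rintro _ ⟨u, -, rfl⟩ ⟨v, -, huv⟩
      exact hxy (by simpa using (congrFun huv 0).symm)

def IsDoubledE8Root (w : Fin 8 → ℤ) : Prop :=
  ∑ i, w i ^ 2 = 8 ∧ ((∀ i, Even (w i)) ∨ ∀ i, Odd (w i)) ∧ 4 ∣ ∑ i, w i

def doubledE8Roots : List (Fin 8 → ℤ) :=
  (vectorsOfSqNorm [-2, 0, 2] 8 8 ++ vectorsOfSqNorm [-1, 1] 8 8).filter fun w => 4 ∣ ∑ i, w i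

theorem nodup_doubledE8Roots : doubledE8Roots.Nodup := by
  refine List.Nodup.filter _ (List.nodup_append.2 ⟨nodup_vectorsOfSqNorm (by decide) _ _,
    nodup_vectorsOfSqNorm (by decide) _ _, ?_⟩)
  intro u hu v hv huv
  have h0 := (mem_vectorsOfSqNorm.1 hu).1 0
  rw [huv] at h0
  have h1 := (mem_vectorsOfSqNorm.1 hv).1 0
  simp only [List.mem_cons, List.not_mem_nil, or_false] at h0 h1
  omega

theorem mem_doubledE8Roots {w : Fin 8 → ℤ} : w ∈ doubledE8Roots ↔ IsDoubledE8Root w := by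
  simp only [doubledE8Roots, IsDoubledE8Root, List.mem_filter, List.mem_append,
    mem_vectorsOfSqNorm, decide_eq_true_eq]
  by_cases hS : ∑ i, w i ^ 2 = 8
  · have hentry (i : Fin 8) :
        (w i ∈ [-2, 0, 2] ↔ Even (w i)) ∧ (w i ∈ [-1, 1] ↔ Odd (w i)) := by
      have := Finset.single_le_sum (fun j _ => sq_nonneg (w j)) (Finset.mem_univ i)
      have h1 : -2 ≤ w i := by nlinarith
      have h2 : w i ≤ 2 := by nlinarith
      interval_cases w i <;> decide
    simp only [hS, and_true, true_and, fun i => (hentry i).1, fun i => (hentry i).2]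
  · simp [hS]

section Halve

variable {n : ℕ}

def halve (w : Fin n → ℤ) : EuclideanSpace ℝ (Fin n) :=
  WithLp.toLp 2 fun i => (w i : ℝ) / 2

@[simp] theorem halve_apply (w : Fin n → ℤ) (i : Fin n) : halve w i = (w i : ℝ) / 2 := rfl

theorem halve_injective : Function.Injective (halve (n := n)) := fun _ _ h =>
  funext fun i => by simpa using congrArg (· i) h

end Halve

theorem Int.exists_intCast_eq_div_two_iff_even (z : ℤ) : (∃ n : ℤ, (z : ℝ) / 2 = n) ↔ Even z := by
  refine ⟨fun ⟨n, h⟩ => ⟨n, ?_⟩, fun ⟨n, h⟩ => ⟨n, ?_⟩⟩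
  · have : (z : ℝ) = n + n := by linarith
    exact_mod_cast this
  · rw [h]; push_cast; ring

theorem Int.exists_intCast_add_half_eq_div_two_iff_odd (z : ℤ) :
    (∃ n : ℤ, (z : ℝ) / 2 = n + 1 / 2) ↔ Odd z := by
  refine ⟨fun ⟨n, h⟩ => ⟨n, ?_⟩, fun ⟨n, h⟩ => ⟨n, ?_⟩⟩
  · have : (z : ℝ) = 2 * n + 1 := by linarith
    exact_mod_cast this
  · rw [h]; push_cast; ring

theorem Int.exists_two_mul_intCast_eq_div_two_iff_four_dvd (z : ℤ) :
    (∃ m : ℤ, (z : ℝ) / 2 = 2 * m) ↔ 4 ∣ z := by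
  refine ⟨fun ⟨m, h⟩ => ⟨m, ?_⟩, fun ⟨m, h⟩ => ⟨m, ?_⟩⟩
  · have : (z : ℝ) = 4 * m := by linarith
    exact_mod_cast this
  · rw [h]; push_cast; ring

theorem halve_mem_E8Delta_iff {w : Fin 8 → ℤ} : halve w ∈ E8Delta ↔ IsDoubledE8Root w := by
  have hnorm : ⟪halve w, halve w⟫ = ((∑ i, w i ^ 2 : ℤ) : ℝ) / 4 := by
    simp only [PiLp.inner_apply, RCLike.inner_apply, conj_trivial, halve_apply]
    push_cast
    rw [Finset.sum_div]
    exact Finset.sum_congr rfl fun i _ => by ring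
  have hsum : ∑ i, halve w i = ((∑ i, w i : ℤ) : ℝ) / 2 := by
    simp only [halve_apply]
    push_cast
    rw [Finset.sum_div]
  simp only [E8Delta, Set.mem_ofPred_eq, hnorm, hsum]
  simp only [halve_apply, Int.exists_intCast_eq_div_two_iff_even,
    Int.exists_intCast_add_half_eq_div_two_iff_odd,
    Int.exists_two_mul_intCast_eq_div_two_iff_four_dvd, IsDoubledE8Root]
  rw [div_eq_iff (by norm_num : (4 : ℝ) ≠ 0)]
  norm_cast

theorem exists_halve_eq_of_mem_E8Delta {v : E8Space} (hv : v ∈ E8Delta) : ∃ w, halve w = v := by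
  have hcoord : ∀ i, ∃ z : ℤ, (z : ℝ) / 2 = v i := by
    rcases hv.2.1 with h | h <;> intro i <;> obtain ⟨n, hn⟩ := h i
    · exact ⟨2 * n, by rw [hn]; push_cast; ring⟩
    · exact ⟨2 * n + 1, by rw [hn]; push_cast; ring⟩
  choose w hw using hcoord
  exact ⟨w, PiLp.ext hw⟩

def e8Roots : Finset E8Space := doubledE8Roots.toFinset.image halve

theorem coe_e8Roots : (e8Roots : Set E8Space) = E8Delta := by
  ext v
  simp only [e8Roots, Finset.coe_image, Set.mem_image, Finset.mem_coe, List.mem_toFinset,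
    mem_doubledE8Roots]
  constructor
  · rintro ⟨w, hw, rfl⟩
    exact halve_mem_E8Delta_iff.2 hw
  · intro hv
    obtain ⟨w, rfl⟩ := exists_halve_eq_of_mem_E8Delta hv
    exact ⟨w, halve_mem_E8Delta_iff.1 hv, rfl⟩

theorem E8Delta_finite : E8Delta.Finite :=
  coe_e8Roots ▸ e8Roots.finite_toSet

theorem sum_doubledE8Roots_mul_apply : ∀ i j : Fin 8,
    (doubledE8Roots.map fun w => w i * w j).sum = if i = j then 240 else 0 := by
  decide +kernel

theorem sum_e8Roots_mul_apply (i j : Fin 8) :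
    ∑ β ∈ e8Roots, β i * β j = if i = j then 60 else 0 := by
  have hcast : ∑ w ∈ doubledE8Roots.toFinset, halve w i * halve w j
      = ((∑ w ∈ doubledE8Roots.toFinset, w i * w j : ℤ) : ℝ) / 4 := by
    push_cast
    rw [Finset.sum_div]
    exact Finset.sum_congr rfl fun w _ => by rw [halve_apply, halve_apply]; ring
  rw [e8Roots, Finset.sum_image fun _ _ _ _ h => halve_injective h, hcast,
    List.sum_toFinset _ nodup_doubledE8Roots, sum_doubledE8Roots_mul_apply]
  split_ifs <;> norm_num

theorem finsum_E8Delta_inner_mul_inner (x y : E8Space) :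
    ∑ᶠ β : E8Delta, ⟪x, (β : E8Space)⟫ * ⟪(β : E8Space), y⟫ = 60 * ⟪x, y⟫ := by
  rw [finsum_set_coe_eq_finsum_mem (f := fun β => ⟪x, β⟫ * ⟪β, y⟫), ← coe_e8Roots,
    finsum_mem_coe_finset]
  exact sum_inner_mul_inner_of_sum_mul_apply sum_e8Roots_mul_apply x y

/-- The Kanev operator of the adjoint orbit of E₈ is linear and satisfies the
quadratic equation `P ∘ P = 60 • P`. -/
theorem KanevP_quadratic :
    IsLinearMap ℝ KanevP ∧ KanevP ∘ KanevP = (60 : ℝ) • KanevP :=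
  ⟨isLinearMap_gramOperator E8Delta_finite,
    gramOperator_comp_self E8Delta_finite finsum_E8Delta_inner_mul_inner⟩
end
end

section
/- The orbits of the stabilizer H on the root system Δ are exactly the nonempty level sets of the pairing with θ: two roots α, β ∈ Δ lie in the same H-orbit if and only if ⟨α,θ⟩ = ⟨β,θ⟩. Consequently H has exactly five orbits on Δ, namely the sets Δ ∩ {x ∈ ℝ⁸ : ⟨x,θ⟩ = i} for i ∈ {−2,−1,0,1,2}. -/
open scoped BigOperators RealInnerProductSpace

noncomputable section

/-- The highest root θ = (0,0,0,0,0,0,1,1) of E₈. -/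
def thetaE8 : E8Space := WithLp.toLp 2 ![0, 0, 0, 0, 0, 0, 1, 1]

/-- The Weyl group of E₈: the group of invertible linear maps of ℝ⁸ generated by
the reflections `x ↦ x − ⟪x,α⟫α` in the roots `α ∈ Δ`. -/
def weylGroupE8 : Subgroup (E8Space ≃ₗ[ℝ] E8Space) :=
  Subgroup.closure
    {g : E8Space ≃ₗ[ℝ] E8Space | ∃ α ∈ E8Delta, ∀ x, g x = x - ⟪x, α⟫ • α}

/-- The stabilizer of the highest root θ in the Weyl group of E₈. -/
def stabThetaE8 : Subgroup (E8Space ≃ₗ[ℝ] E8Space) :=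
  weylGroupE8 ⊓ MulAction.stabilizer (E8Space ≃ₗ[ℝ] E8Space) thetaE8

/-!
The stabilizer `H` contains the reflections in the roots orthogonal to `θ`, in particular the
simple reflections of the `E₇` with Bourbaki's simple roots `α₁, …, α₇`. In the (finite) `H`-orbit
of a root, a point maximising the pairing with the Weyl vector `ρ` of this `E₇` is dominant, since a
simple reflection `s_i` with `⟪β, αᵢ⟫ < 0` would increase it. A direct computation in doubled
integer coordinates shows that there are exactly five dominant roots, one for each value
`-2, …, 2` of `⟪·, θ⟫`. As `H` fixes `θ` and preserves the inner product, the orbits are the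
level sets.
-/

open Matrix

lemma Set.injOn_fiber {α β : Type*} (s : Set α) (f : α → β) :
    Set.InjOn (fun b => {a ∈ s | f a = b}) (f '' s) := by
  rintro _ ⟨a, ha, rfl⟩ b _ h
  exact (h.subset ⟨ha, rfl⟩).2

namespace E8

def ofDoubled (d : Fin 8 → ℤ) : E8Space := WithLp.toLp 2 fun i => (d i : ℝ) / 2

@[simp]
lemma ofDoubled_apply (d : Fin 8 → ℤ) (i : Fin 8) : ofDoubled d i = (d i : ℝ) / 2 := rfl

lemma ofDoubled_sub_zsmul (d e : Fin 8 → ℤ) (k : ℤ) :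
    ofDoubled (d - k • e) = ofDoubled d - (k : ℝ) • ofDoubled e := by
  ext i
  simp only [zsmul_eq_mul, ofDoubled_apply, Pi.sub_apply, Pi.mul_apply, Pi.intCast_apply,
    Int.cast_eq, Int.cast_sub, Int.cast_mul, PiLp.sub_apply, PiLp.smul_apply, smul_eq_mul]
  ring

lemma inner_ofDoubled (d e : Fin 8 → ℤ) :
    ⟪ofDoubled d, ofDoubled e⟫ = (d ⬝ᵥ e : ℤ) / 4 := by
  simp only [PiLp.inner_apply, ofDoubled_apply, dotProduct, RCLike.inner_apply, conj_trivial,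
    Int.cast_sum, Int.cast_mul, Finset.sum_div]
  exact Finset.sum_congr rfl fun i _ => by ring

lemma sum_ofDoubled (d : Fin 8 → ℤ) : ∑ i, ofDoubled d i = (∑ i, d i : ℤ) / 2 := by
  simp [Finset.sum_div]

def IsDoubledRoot (d : Fin 8 → ℤ) : Prop :=
  (∀ i, d i ≡ d 0 [ZMOD 2]) ∧ 4 ∣ ∑ i, d i ∧ d ⬝ᵥ d = 8

instance : DecidablePred IsDoubledRoot := fun _ => by unfold IsDoubledRoot; infer_instance

namespace IsDoubledRoot

variable {d e : Fin 8 → ℤ}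

lemma mem_Icc (hd : IsDoubledRoot d) (i : Fin 8) : d i ∈ Set.Icc (-2) 2 := by
  have h : d i * d i ≤ 8 := hd.2.2 ▸ Finset.single_le_sum (f := fun j => d j * d j)
    (fun j _ => mul_self_nonneg (d j)) (Finset.mem_univ i)
  constructor <;> nlinarith

lemma four_dvd_dotProduct (hd : IsDoubledRoot d) (he : IsDoubledRoot e) : 4 ∣ d ⬝ᵥ e := by
  obtain ⟨k, hk⟩ := hd.2.1
  obtain ⟨l, hl⟩ := he.2.1
  have half (f : Fin 8 → ℤ) (hf : ∀ i, f i ≡ f 0 [ZMOD 2]) :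
      ∃ a : Fin 8 → ℤ, f = fun i => f 0 % 2 + 2 * a i :=
    ⟨fun i => f i / 2, funext fun i => by have := hf i; unfold Int.ModEq at this; dsimp only; omega⟩
  obtain ⟨a, ha⟩ := half d hd.1
  obtain ⟨b, hb⟩ := half e he.1
  generalize d 0 % 2 = p at ha
  generalize e 0 % 2 = q at hb
  subst ha hb
  simp only [dotProduct, Fin.sum_univ_eight] at hk hl ⊢
  refine ⟨a 0 * b 0 + a 1 * b 1 + a 2 * b 2 + a 3 * b 3 + a 4 * b 4 + a 5 * b 5 + a 6 * b 6
    + a 7 * b 7 + p * l + q * k - 2 * p * q, ?_⟩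
  linear_combination q * hk + p * hl

lemma sub_zsmul (hd : IsDoubledRoot d) (he : IsDoubledRoot e) {k : ℤ} (hk : d ⬝ᵥ e = 4 * k) :
    IsDoubledRoot (d - k • e) := by
  refine ⟨fun i => (hd.1 i).sub ((he.1 i).mul_left k), ?_, ?_⟩
  · simp only [Pi.sub_apply, Pi.smul_apply, smul_eq_mul, Finset.sum_sub_distrib, ← Finset.mul_sum]
    exact dvd_sub hd.2.1 (dvd_mul_of_dvd_right he.2.1 _)
  · simp only [sub_dotProduct, dotProduct_sub, smul_dotProduct, dotProduct_smul, smul_eq_mul,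
      dotProduct_comm e d, hk, hd.2.2, he.2.2]
    ring

end IsDoubledRoot

lemma mem_E8Delta_iff {v : E8Space} : v ∈ E8Delta ↔ ∃ d, IsDoubledRoot d ∧ ofDoubled d = v := by
  constructor
  · rintro ⟨hvv, htype, m, hm⟩
    obtain ⟨d, hpar, rfl⟩ : ∃ d : Fin 8 → ℤ, (∀ i, d i ≡ d 0 [ZMOD 2]) ∧ ofDoubled d = v := by
      rcases htype with h | h <;> choose n hn using h
      · exact ⟨fun i => 2 * n i, fun i => by simp [Int.ModEq],
          by ext i; simp [hn]⟩
      · exact ⟨fun i => 2 * n i + 1, fun i => by simp [Int.ModEq],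
          by ext i; simp only [ofDoubled_apply, Int.cast_add, Int.cast_mul, Int.cast_one, hn]; ring⟩
    rw [inner_ofDoubled] at hvv
    rw [sum_ofDoubled] at hm
    refine ⟨d, ⟨hpar, ⟨m, ?_⟩, ?_⟩, rfl⟩
    · exact_mod_cast (by linarith : ((∑ i, d i : ℤ) : ℝ) = 4 * m)
    · exact_mod_cast (by linarith : ((d ⬝ᵥ d : ℤ) : ℝ) = 8)
  · rintro ⟨d, ⟨hpar, ⟨k, hk⟩, hdd⟩, rfl⟩
    refine ⟨by rw [inner_ofDoubled, hdd]; norm_num, ?_, k,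
      by rw [sum_ofDoubled, hk]; push_cast; ring⟩
    have hpar' : ∀ i, d i % 2 = d 0 % 2 := hpar
    rcases Int.emod_two_eq_zero_or_one (d 0) with h0 | h0
    · refine Or.inl fun i => ?_
      obtain ⟨n, hn⟩ : ∃ n, d i = 2 * n := ⟨d i / 2, by have := hpar' i; omega⟩
      exact ⟨n, by rw [ofDoubled_apply, hn]; push_cast; ring⟩
    · refine Or.inr fun i => ?_
      obtain ⟨n, hn⟩ : ∃ n, d i = 2 * n + 1 := ⟨d i / 2, by have := hpar' i; omega⟩
      exact ⟨n, by rw [ofDoubled_apply, hn]; push_cast; ring⟩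

lemma ofDoubled_mem_E8Delta {d : Fin 8 → ℤ} (hd : IsDoubledRoot d) : ofDoubled d ∈ E8Delta :=
  mem_E8Delta_iff.2 ⟨d, hd, rfl⟩

lemma finite_E8Delta : E8Delta.Finite := by
  refine ((Set.Finite.pi' fun _ => Set.finite_Icc (-2 : ℤ) 2).image ofDoubled).subset ?_
  rintro v hv
  obtain ⟨d, hd, rfl⟩ := mem_E8Delta_iff.1 hv
  exact ⟨d, hd.mem_Icc, rfl⟩

lemma sub_inner_smul_mem_E8Delta {α γ : E8Space} (hα : α ∈ E8Delta) (hγ : γ ∈ E8Delta) :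
    α - ⟪α, γ⟫ • γ ∈ E8Delta := by
  obtain ⟨d, hd, rfl⟩ := mem_E8Delta_iff.1 hα
  obtain ⟨e, he, rfl⟩ := mem_E8Delta_iff.1 hγ
  obtain ⟨k, hk⟩ := hd.four_dvd_dotProduct he
  have hinner : ⟪ofDoubled d, ofDoubled e⟫ = k := by rw [inner_ofDoubled, hk]; push_cast; ring
  rw [hinner, ← ofDoubled_sub_zsmul]
  exact ofDoubled_mem_E8Delta (hd.sub_zsmul he hk)

lemma inner_map_map_of_mem_weylGroupE8 {g : E8Space ≃ₗ[ℝ] E8Space} (hg : g ∈ weylGroupE8)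
    (x y : E8Space) : ⟪g x, g y⟫ = ⟪x, y⟫ := by
  induction hg using Subgroup.closure_induction generalizing x y with
  | mem g hg =>
    obtain ⟨α, hα, hgα⟩ := hg
    have hαα : ⟪α, α⟫ = 2 := hα.1
    simp only [hgα, inner_sub_left, inner_sub_right, real_inner_smul_left, real_inner_smul_right,
      hαα, real_inner_comm α]
    ring
  | one => rfl
  | mul g h _ _ hg hh => exact (hg _ _).trans (hh x y)
  | inv g _ hg => simpa using (hg (g.symm x) (g.symm y)).symm

lemma inner_thetaE8_map_of_mem_stabThetaE8 {g : E8Space ≃ₗ[ℝ] E8Space} (hg : g ∈ stabThetaE8)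
    (x : E8Space) : ⟪g x, thetaE8⟫ = ⟪x, thetaE8⟫ := by
  conv_lhs => rw [← MulAction.mem_stabilizer_iff.1 hg.2]
  exact inner_map_map_of_mem_weylGroupE8 hg.1 x thetaE8

def rootReflection {γ : E8Space} (hγ : γ ∈ E8Delta) : E8Space ≃ₗ[ℝ] E8Space :=
  Module.reflection (show innerₛₗ ℝ γ γ = 2 from hγ.1)

lemma rootReflection_apply {γ : E8Space} (hγ : γ ∈ E8Delta) (x : E8Space) :
    rootReflection hγ x = x - ⟪x, γ⟫ • γ := by
  rw [rootReflection, Module.reflection_apply, innerₛₗ_apply_apply, real_inner_comm]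

lemma rootReflection_mem_stabThetaE8 {γ : E8Space} (hγ : γ ∈ E8Delta) (hθ : ⟪γ, thetaE8⟫ = 0) :
    rootReflection hγ ∈ stabThetaE8 :=
  ⟨Subgroup.subset_closure ⟨γ, hγ, rootReflection_apply hγ⟩, by
    change rootReflection hγ thetaE8 = thetaE8
    rw [rootReflection_apply, real_inner_comm, hθ, zero_smul, sub_zero]⟩

lemma thetaE8_eq_ofDoubled : thetaE8 = ofDoubled ![0, 0, 0, 0, 0, 0, 2, 2] := by
  ext i; fin_cases i <;> simp [thetaE8]

lemma inner_ofDoubled_thetaE8 (d : Fin 8 → ℤ) :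
    ⟪ofDoubled d, thetaE8⟫ = ((d 6 + d 7 : ℤ) : ℝ) / 2 := by
  rw [thetaE8_eq_ofDoubled, inner_ofDoubled]
  simp only [dotProduct, Fin.sum_univ_eight, Fin.isValue, cons_val_zero, mul_zero, cons_val_one,
    add_zero, cons_val, zero_add, Int.cast_add, Int.cast_mul, Int.cast_ofNat]
  ring

/-- Bourbaki's simple roots `α₁, …, α₇` of `E₈`, which span the `E₇` orthogonal to `θ`. -/
def simpleDoubled : Fin 7 → Fin 8 → ℤ :=
  ![![1, -1, -1, -1, -1, -1, -1, 1], ![2, 2, 0, 0, 0, 0, 0, 0], ![-2, 2, 0, 0, 0, 0, 0, 0],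
    ![0, -2, 2, 0, 0, 0, 0, 0], ![0, 0, -2, 2, 0, 0, 0, 0], ![0, 0, 0, -2, 2, 0, 0, 0],
    ![0, 0, 0, 0, -2, 2, 0, 0]]

def simpleRoot (j : Fin 7) : E8Space := ofDoubled (simpleDoubled j)

/-- The Weyl vector `(0, 1, 2, 3, 4, 5, -17/2, 17/2)` of the `E₇` spanned by the simple roots. -/
def rhoE7 : E8Space := ofDoubled ![0, 2, 4, 6, 8, 10, -17, 17]

lemma simpleRoot_mem_E8Delta (j : Fin 7) : simpleRoot j ∈ E8Delta :=
  ofDoubled_mem_E8Delta (by revert j; decide)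

lemma inner_simpleRoot_thetaE8 (j : Fin 7) : ⟪simpleRoot j, thetaE8⟫ = 0 := by
  rw [simpleRoot, inner_ofDoubled_thetaE8, (by revert j; decide :
    ∀ j, simpleDoubled j 6 + simpleDoubled j 7 = 0) j, Int.cast_zero, zero_div]

lemma inner_simpleRoot_rhoE7 (j : Fin 7) : ⟪simpleRoot j, rhoE7⟫ = 1 := by
  rw [simpleRoot, rhoE7, inner_ofDoubled, (by revert j; decide :
    ∀ j, simpleDoubled j ⬝ᵥ ![0, 2, 4, 6, 8, 10, -17, 17] = 4) j]
  norm_num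

def IsDominant (v : E8Space) : Prop := ∀ j, 0 ≤ ⟪v, simpleRoot j⟫

lemma isDominant_ofDoubled_iff {d : Fin 8 → ℤ} :
    IsDominant (ofDoubled d) ↔ d 1 + d 2 + d 3 + d 4 + d 5 + d 6 ≤ d 0 + d 7 ∧
      0 ≤ d 0 + d 1 ∧ d 0 ≤ d 1 ∧ d 1 ≤ d 2 ∧ d 2 ≤ d 3 ∧ d 3 ≤ d 4 ∧ d 4 ≤ d 5 := by
  have : IsDominant (ofDoubled d) ↔ ∀ j, 0 ≤ d ⬝ᵥ simpleDoubled j :=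
    forall_congr' fun j => by
      rw [simpleRoot, inner_ofDoubled, le_div_iff₀ four_pos, zero_mul, Int.cast_nonneg_iff]
  rw [this]
  simp only [dotProduct, simpleDoubled, Int.reduceNeg, cons_val', cons_val_fin_one,
    Fin.sum_univ_eight, Fin.isValue, cons_val_zero, cons_val_one, cons_val, Fin.forall_fin_succ,
    mul_one, mul_neg, cons_val_succ, mul_zero, add_zero, le_neg_add_iff_add_le, Order.lt_two_iff,
    zero_le_one, Int.mul_le_mul_right, zero_add, forall_const]
  omega

def dominantDoubled : Finset (Fin 8 → ℤ) :=
  {![0, 0, 0, 0, 0, 0, 2, 2], ![0, 0, 0, 0, 0, 2, 0, 2], ![0, 0, 0, 0, 0, 0, -2, 2],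
    ![0, 0, 0, 0, 0, 2, -2, 0], ![0, 0, 0, 0, 0, 0, -2, -2]}

lemma mem_dominantDoubled {d : Fin 8 → ℤ} (hd : IsDoubledRoot d)
    (hdom : IsDominant (ofDoubled d)) : d ∈ dominantDoubled := by
  obtain ⟨hα₁, hα₂, h01, h12, h23, h34, h45⟩ := isDominant_ofDoubled_iff.1 hdom
  have hb : ∀ i, -2 ≤ d i ∧ d i ≤ 2 := hd.mem_Icc
  have hpar : ∀ i, d i % 2 = d 0 % 2 := hd.1
  rcases Int.emod_two_eq_zero_or_one (d 0) with h0 | h0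
  · obtain ⟨e, rfl⟩ : ∃ e : Fin 8 → ℤ, d = fun i => 2 * e i :=
      ⟨fun i => d i / 2, funext fun i => by have := hpar i; dsimp only; omega⟩
    beta_reduce at hb hα₁ hα₂ h01 h12 h23 h34 h45
    -- Each `e i` is `-1`, `0` or `1`, so `e i * e i = |e i|` and the norm condition is linear.
    have hsq : ∀ i, e i * e i = max (e i) (-e i) := fun i => by
      have := hb i
      rcases (by omega : e i = -1 ∨ e i = 0 ∨ e i = 1) with h | h | h <;> simp [h]
    have hsq_of_nonneg : ∀ i, 0 ≤ e i → e i * e i = e i := fun i h => by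
      rw [hsq, max_eq_left (neg_le_self h)]
    have hnorm : ∑ i, e i * e i = 2 := by
      have := hd.2.2
      simp only [dotProduct] at this
      linarith [show ∑ i, 2 * e i * (2 * e i) = 4 * ∑ i, e i * e i by
        rw [Finset.mul_sum]; exact Finset.sum_congr rfl fun i _ => by ring]
    obtain ⟨h1, h2, h3, h4, h5⟩ : 0 ≤ e 1 ∧ 0 ≤ e 2 ∧ 0 ≤ e 3 ∧ 0 ≤ e 4 ∧ 0 ≤ e 5 := by omega
    rw [Fin.sum_univ_eight, hsq 0, hsq_of_nonneg 1 h1, hsq_of_nonneg 2 h2, hsq_of_nonneg 3 h3,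
      hsq_of_nonneg 4 h4, hsq_of_nonneg 5 h5, hsq 6, hsq 7] at hnorm
    have := hb 0; have := hb 5; have := hb 6; have := hb 7
    obtain ⟨he0, he1, he2, he3, he4⟩ : e 0 = 0 ∧ e 1 = 0 ∧ e 2 = 0 ∧ e 3 = 0 ∧ e 4 = 0 := by omega
    rw [he0, he1, he2, he3, he4] at hnorm hα₁
    rw [show e = ![0, 0, 0, 0, 0, e 5, e 6, e 7] by ext i; fin_cases i <;> simp [*]]
    rcases (by omega : e 5 = 0 ∧ e 6 = 1 ∧ e 7 = 1 ∨ e 5 = 1 ∧ e 6 = 0 ∧ e 7 = 1 ∨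
        e 5 = 0 ∧ e 6 = -1 ∧ e 7 = 1 ∨ e 5 = 1 ∧ e 6 = -1 ∧ e 7 = 0 ∨
        e 5 = 0 ∧ e 6 = -1 ∧ e 7 = -1) with ⟨h5, h6, h7⟩ | ⟨h5, h6, h7⟩ | ⟨h5, h6, h7⟩ |
        ⟨h5, h6, h7⟩ | ⟨h5, h6, h7⟩ <;>
      rw [h5, h6, h7] <;> decide
  · -- No root with odd coordinates is dominant.
    have := hb 0; have := hb 1; have := hb 6; have := hb 7
    have := hpar 1; have := hpar 2; have := hpar 3; have := hpar 4; have := hpar 5; have := hpar 6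
    omega

lemma dominantDoubled_eq_of_level_eq :
    ∀ d ∈ dominantDoubled, ∀ e ∈ dominantDoubled, d 6 + d 7 = e 6 + e 7 → d = e := by
  decide

lemma exists_mem_stabThetaE8_isDominant {α : E8Space} (hα : α ∈ E8Delta) :
    ∃ g ∈ stabThetaE8, g α ∈ E8Delta ∧ IsDominant (g α) := by
  -- A point of the orbit maximising `⟪·, rhoE7⟫` is dominant: a simple reflection would
  -- increase it.
  obtain ⟨_, ⟨hβ, g, hg, rfl⟩, hmax⟩ := Set.exists_max_image
    {β ∈ E8Delta | ∃ g ∈ stabThetaE8, g α = β} (⟪·, rhoE7⟫)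
    (finite_E8Delta.subset fun _ h => h.1) ⟨α, hα, 1, one_mem _, rfl⟩
  refine ⟨g, hg, hβ, fun j => not_lt.1 fun hneg => ?_⟩
  have hγ := simpleRoot_mem_E8Delta j
  have := hmax _ ⟨sub_inner_smul_mem_E8Delta hβ hγ, rootReflection hγ * g,
    mul_mem (rootReflection_mem_stabThetaE8 hγ (inner_simpleRoot_thetaE8 j)) hg,
    rootReflection_apply hγ _⟩
  rw [inner_sub_left, real_inner_smul_left, inner_simpleRoot_rhoE7] at this
  linarith

lemma IsDominant.eq_of_inner_thetaE8_eq {α β : E8Space} (hα : α ∈ E8Delta) (hβ : β ∈ E8Delta)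
    (hαd : IsDominant α) (hβd : IsDominant β) (h : ⟪α, thetaE8⟫ = ⟪β, thetaE8⟫) : α = β := by
  obtain ⟨d, hd, rfl⟩ := mem_E8Delta_iff.1 hα
  obtain ⟨e, he, rfl⟩ := mem_E8Delta_iff.1 hβ
  rw [inner_ofDoubled_thetaE8, inner_ofDoubled_thetaE8, div_left_inj' two_ne_zero,
    Int.cast_inj] at h
  rw [dominantDoubled_eq_of_level_eq d (mem_dominantDoubled hd hαd)
    e (mem_dominantDoubled he hβd) h]

theorem exists_mem_stabThetaE8_apply_eq_iff {α β : E8Space} (hα : α ∈ E8Delta)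
    (hβ : β ∈ E8Delta) : (∃ g ∈ stabThetaE8, g α = β) ↔ ⟪α, thetaE8⟫ = ⟪β, thetaE8⟫ := by
  refine ⟨fun ⟨g, hg, hgα⟩ => hgα ▸ (inner_thetaE8_map_of_mem_stabThetaE8 hg α).symm, fun h => ?_⟩
  obtain ⟨g, hg, hgα, hgd⟩ := exists_mem_stabThetaE8_isDominant hα
  obtain ⟨k, hk, hkβ, hkd⟩ := exists_mem_stabThetaE8_isDominant hβ
  have hgk : g α = k β := hgd.eq_of_inner_thetaE8_eq hgα hkβ hkd <| by
    rw [inner_thetaE8_map_of_mem_stabThetaE8 hg, inner_thetaE8_map_of_mem_stabThetaE8 hk, h]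
  exact ⟨k⁻¹ * g, mul_mem (inv_mem hk) hg, by simp [hgk]⟩

lemma image_inner_thetaE8_E8Delta : (⟪·, thetaE8⟫) '' E8Delta = {-2, -1, 0, 1, 2} := by
  ext x
  constructor
  · rintro ⟨α, hα, rfl⟩
    obtain ⟨d, hd, rfl⟩ := mem_E8Delta_iff.1 hα
    have h6 := hd.mem_Icc 6; have h7 := hd.mem_Icc 7
    have hpar : d 6 % 2 = d 7 % 2 := (hd.1 6).trans (hd.1 7).symm
    simp only [Set.mem_Icc] at h6 h7
    change ⟪ofDoubled d, thetaE8⟫ ∈ _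
    rw [inner_ofDoubled_thetaE8]
    rcases (by omega : d 6 + d 7 = -4 ∨ d 6 + d 7 = -2 ∨ d 6 + d 7 = 0 ∨ d 6 + d 7 = 2 ∨
      d 6 + d 7 = 4) with h | h | h | h | h <;> rw [h] <;> norm_num
  · have level_mem (d : Fin 8 → ℤ) (t : ℤ) (hd : IsDoubledRoot d) (ht : d 6 + d 7 = t) :
        (t : ℝ) / 2 ∈ (⟪·, thetaE8⟫) '' E8Delta :=
      ⟨_, ofDoubled_mem_E8Delta hd, ht ▸ inner_ofDoubled_thetaE8 d⟩
    rintro (rfl | rfl | rfl | rfl | rfl)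
    · convert level_mem ![0, 0, 0, 0, 0, 0, -2, -2] (-4) (by decide) rfl using 1; norm_num
    · convert level_mem ![0, 0, 0, 0, 0, 2, -2, 0] (-2) (by decide) rfl using 1; norm_num
    · convert level_mem ![0, 0, 0, 0, 0, 0, -2, 2] 0 (by decide) rfl using 1; norm_num
    · convert level_mem ![0, 0, 0, 0, 0, 2, 0, 2] 2 (by decide) rfl using 1; norm_num
    · convert level_mem ![0, 0, 0, 0, 0, 0, 2, 2] 4 (by decide) rfl using 1; norm_num

end E8

/-- Two E₈ roots lie in the same orbit of the stabilizer `H` of θ if and only if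
they have the same pairing with θ; consequently `H` has exactly five orbits on Δ,
namely the nonempty level sets of the pairing with θ. -/
theorem stabTheta_orbits_on_E8Delta :
    (∀ α ∈ E8Delta, ∀ β ∈ E8Delta,
      ((∃ g ∈ stabThetaE8, g α = β) ↔ ⟪α, thetaE8⟫ = ⟪β, thetaE8⟫)) ∧
    {s : Set E8Space | ∃ α ∈ E8Delta, s = {β ∈ E8Delta | ∃ g ∈ stabThetaE8, g α = β}} =
      {s : Set E8Space | ∃ i ∈ ({-2, -1, 0, 1, 2} : Set ℝ),
        s = {x ∈ E8Delta | ⟪x, thetaE8⟫ = i}} ∧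
    {s : Set E8Space |
      ∃ α ∈ E8Delta, s = {β ∈ E8Delta | ∃ g ∈ stabThetaE8, g α = β}}.ncard = 5 := by
  have orbit_eq {α : E8Space} (hα : α ∈ E8Delta) :
      {β ∈ E8Delta | ∃ g ∈ stabThetaE8, g α = β} = {x ∈ E8Delta | ⟪x, thetaE8⟫ = ⟪α, thetaE8⟫} :=
    Set.ext fun β => and_congr_right fun hβ =>
      (E8.exists_mem_stabThetaE8_apply_eq_iff hα hβ).trans eq_comm
  have orbits_eq : {s : Set E8Space | ∃ α ∈ E8Delta,
      s = {β ∈ E8Delta | ∃ g ∈ stabThetaE8, g α = β}} =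
      (fun i => {x ∈ E8Delta | ⟪x, thetaE8⟫ = i}) '' ((⟪·, thetaE8⟫) '' E8Delta) := by
    ext s
    simp only [Set.image_image, Set.mem_image]
    refine exists_congr fun α => and_congr_right fun hα => ?_
    rw [eq_comm, orbit_eq hα]
  refine ⟨fun α hα β hβ => E8.exists_mem_stabThetaE8_apply_eq_iff hα hβ, ?_, ?_⟩
  · rw [orbits_eq, E8.image_inner_thetaE8_E8Delta]
    ext s
    simp [eq_comm]
  · rw [orbits_eq, (Set.injOn_fiber _ _).ncard_image, E8.image_inner_thetaE8_E8Delta]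
    norm_num [Set.ncard_insert_of_notMem]
end
end
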